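/- arXiv:2009.13609 — 2 statements merged into one kernel-verified Lean document; each statement's English description precedes it below -/
import Mathlib

section
/- Let V : X → ℝ be a value function on a finite state space X satisfying the Bellman equation V(x) = min over controlled distributions u(·|x) ≪ p(·|x) of [q(x) + KL(u(·|x)‖p(·|x)) + ∑_{x'} u(x'|x)V(x')], where p(·|x) is a strictly positive transition probability and q(x) ∈ ℝ. Then the desirability function Z(x) = exp(−V(x)) satisfies the linear equation exp(q(x))·Z(x) = ∑_{x'} p(x'|x)·Z(x'). -/
/-!
For fixed `x`, the Bellman minimisation over `u` is a Gibbs variational problem: with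
`G = ∑ x', p x x' * exp (-V x')` and the Gibbs weights `w = p * exp (-V) / G`,
`∑ u log (u / p) + ∑ u V = KL(u ‖ w) - log G`. Gibbs' inequality `KL(u ‖ w) ≥ 0`, with equality at
`u = w`, shows that the minimum is `q x - log G`, so `V x = q x - log G`, i.e.
`exp (q x) * exp (-V x) = G`.
-/

open Finset Real

lemma sub_le_mul_log_div {a b : ℝ} (ha : 0 ≤ a) (hb : 0 < b) : a - b ≤ a * log (a / b) := by
  have h := mul_nonneg hb.le (InformationTheory.klFun_nonneg (div_nonneg ha hb.le))
  rw [InformationTheory.klFun_apply] at h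
  have hexpand : b * (a / b * log (a / b) + 1 - a / b) = a * log (a / b) + b - a := by
    field_simp
  linarith

theorem Finset.sum_mul_log_div_nonneg {ι : Type*} (s : Finset ι) {u w : ι → ℝ}
    (hu : ∀ i ∈ s, 0 ≤ u i) (hw : ∀ i ∈ s, 0 < w i) (hsum : ∑ i ∈ s, u i = ∑ i ∈ s, w i) :
    0 ≤ ∑ i ∈ s, u i * log (u i / w i) :=
  calc (0 : ℝ) = ∑ i ∈ s, (u i - w i) := by rw [sum_sub_distrib, hsum, sub_self]
    _ ≤ _ := sum_le_sum fun i hi => sub_le_mul_log_div (hu i hi) (hw i hi)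

section Gibbs

variable {ι : Type*} [Fintype ι]

noncomputable def partitionFunction (p f : ι → ℝ) : ℝ := ∑ i, p i * exp (-f i)

noncomputable def gibbsWeight (p f : ι → ℝ) (i : ι) : ℝ :=
  p i * exp (-f i) / partitionFunction p f

variable {p : ι → ℝ} (f : ι → ℝ)

lemma partitionFunction_pos [Nonempty ι] (hp : ∀ i, 0 < p i) : 0 < partitionFunction p f :=
  sum_pos (fun i _ => mul_pos (hp i) (exp_pos _)) univ_nonempty

lemma gibbsWeight_pos [Nonempty ι] (hp : ∀ i, 0 < p i) (i : ι) : 0 < gibbsWeight p f i :=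
  div_pos (mul_pos (hp i) (exp_pos _)) (partitionFunction_pos f hp)

lemma sum_gibbsWeight [Nonempty ι] (hp : ∀ i, 0 < p i) : ∑ i, gibbsWeight p f i = 1 := by
  simp only [gibbsWeight]
  rw [← sum_div]
  exact div_self (partitionFunction_pos f hp).ne'

lemma log_div_gibbsWeight [Nonempty ι] (hp : ∀ i, 0 < p i) {a : ℝ} (ha : 0 < a) (i : ι) :
    log (a / gibbsWeight p f i) = log (a / p i) + f i + log (partitionFunction p f) := by
  have hZ := partitionFunction_pos f hp
  have hsplit : a / gibbsWeight p f i = a / p i * (exp (f i) * partitionFunction p f) := by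
    rw [gibbsWeight, exp_neg]
    field_simp [(hp i).ne']
  rw [hsplit, log_mul (div_pos ha (hp i)).ne' (mul_pos (exp_pos _) hZ).ne',
    log_mul (exp_pos _).ne' hZ.ne', log_exp, add_assoc]

lemma free_energy_eq_sum_mul_log_div_gibbsWeight [Nonempty ι] (hp : ∀ i, 0 < p i) {u : ι → ℝ}
    (hu : ∀ i, 0 ≤ u i) (hsum : ∑ i, u i = 1) :
    ∑ i, u i * log (u i / p i) + ∑ i, u i * f i
      = ∑ i, u i * log (u i / gibbsWeight p f i) - log (partitionFunction p f) := by
  have hpoint : ∀ i, u i * log (u i / p i) + u i * f i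
      = u i * log (u i / gibbsWeight p f i) - u i * log (partitionFunction p f) := by
    intro i
    rcases (hu i).eq_or_lt with hzero | hpos
    · simp [← hzero]
    · rw [log_div_gibbsWeight f hp hpos]
      ring
  rw [← sum_add_distrib, sum_congr rfl fun i _ => hpoint i, sum_sub_distrib, ← sum_mul, hsum,
    one_mul]

theorem isLeast_free_energy [Nonempty ι] (hp : ∀ i, 0 < p i) (a : ℝ) :
    IsLeast {c : ℝ | ∃ u : ι → ℝ, (∀ i, 0 ≤ u i) ∧ (∑ i, u i = 1) ∧ (∀ i, p i = 0 → u i = 0) ∧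
        c = a + (∑ i, u i * log (u i / p i)) + ∑ i, u i * f i}
      (a - log (partitionFunction p f)) := by
  constructor
  · refine ⟨gibbsWeight p f, fun i => (gibbsWeight_pos f hp i).le, sum_gibbsWeight f hp,
      fun i hi => absurd hi (hp i).ne', ?_⟩
    rw [add_assoc, free_energy_eq_sum_mul_log_div_gibbsWeight f hp
      (fun i => (gibbsWeight_pos f hp i).le) (sum_gibbsWeight f hp)]
    simp only [div_self (gibbsWeight_pos f hp _).ne', log_one, mul_zero, sum_const_zero]
    ring
  · rintro _ ⟨u, hu, hsum, -, rfl⟩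
    have hgibbs := sum_mul_log_div_nonneg univ (fun i _ => hu i)
      (fun i _ => gibbsWeight_pos f hp i) (hsum.trans (sum_gibbsWeight f hp).symm)
    rw [add_assoc, free_energy_eq_sum_mul_log_div_gibbsWeight f hp hu hsum]
    linarith

end Gibbs

theorem bellman_exponential_linearization_general {X : Type*} [Fintype X]
    (p : X → X → ℝ) (hp : ∀ x x', 0 < p x x')
    (q : X → ℝ) (V : X → ℝ)
    (hBellman : ∀ x, IsLeast
      {c : ℝ | ∃ u : X → ℝ, (∀ x', 0 ≤ u x') ∧ (∑ x', u x' = 1) ∧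
        (∀ x', p x x' = 0 → u x' = 0) ∧
        c = q x + (∑ x', u x' * Real.log (u x' / p x x')) + ∑ x', u x' * V x'}
      (V x)) :
    ∀ x, Real.exp (q x) * Real.exp (-V x) = ∑ x', p x x' * Real.exp (-V x') := by
  intro x
  have : Nonempty X := ⟨x⟩
  have hV : V x = q x - log (partitionFunction (p x) V) :=
    (hBellman x).unique (isLeast_free_energy V (hp x) (q x))
  rw [hV, neg_sub, exp_sub, exp_log (partitionFunction_pos V (hp x)), partitionFunction]
  field_simp

/-- exponential transformation linearizes the discrete-time Bellman
equation. If `V` satisfies the Bellman equation (i.e. `V x` is the minimum over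
controlled distributions `u(·|x) ≪ p(·|x)` of
`q x + KL(u(·|x)‖p(·|x)) + ∑ x', u x' * V x'`), then `Z = exp (-V)` satisfies
`exp (q x) * Z x = ∑ x', p x x' * Z x'`. -/
theorem bellman_exponential_linearization {X : Type*} [Fintype X] [Nonempty X]
    (p : X → X → ℝ) (hp : ∀ x x', 0 < p x x') (hpsum : ∀ x, ∑ x', p x x' = 1)
    (q : X → ℝ) (V : X → ℝ)
    (hBellman : ∀ x, IsLeast
      {c : ℝ | ∃ u : X → ℝ, (∀ x', 0 ≤ u x') ∧ (∑ x', u x' = 1) ∧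
        (∀ x', p x x' = 0 → u x' = 0) ∧
        c = q x + (∑ x', u x' * Real.log (u x' / p x x')) + ∑ x', u x' * V x'}
      (V x)) :
    ∀ x, Real.exp (q x) * Real.exp (-V x) = ∑ x', p x x' * Real.exp (-V x') :=
  bellman_exponential_linearization_general p hp q V hBellman
end

section
/- Let X be a finite set, p a strictly positive probability distribution on X, and let Z^{(1)}, …, Z^{(F)} : X → ℝ be strictly positive functions with associated controls u^{(f)}(x) = p(x)Z^{(f)}(x)/G[Z^{(f)}], where G[Z] = ∑_x p(x)Z(x). For nonnegative weights ω_1, …, ω_F (not all zero), define Z = ∑_f ω_f Z^{(f)} and the composite control u(x) = p(x)Z(x)/G[Z]. Then u(x) = ∑_f W_f · u^{(f)}(x) for all x, where W_f = ω_f G[Z^{(f)}] / ∑_e ω_e G[Z^{(e)}], and the W_f are nonnegative and sum to 1. -/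
open Finset

/-- discrete-time compositionality of LSOC. With
`u^{(f)}(x) = p x * Z^{(f)} x / G[Z^{(f)}]`, `Z = ∑ f, ω f • Z^{(f)}` and
`u(x) = p x * Z x / G[Z]`, one has `u = ∑ f, W f • u^{(f)}` where
`W f = ω f * G[Z^{(f)}] / ∑ e, ω e * G[Z^{(e)}]`, and `W` is a probability
vector. -/
theorem lsoc_discrete_compositionality {X : Type*} [Fintype X] [Nonempty X] {F : ℕ}
    (p : X → ℝ) (hp : ∀ x, 0 < p x) (hpsum : ∑ x, p x = 1)
    (Z : Fin F → X → ℝ) (hZ : ∀ f x, 0 < Z f x)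
    (ω : Fin F → ℝ) (hω : ∀ f, 0 ≤ ω f) (hωne : ∃ f, ω f ≠ 0) :
    let G : (X → ℝ) → ℝ := fun W => ∑ x, p x * W x
    let u : (Fin F) → X → ℝ := fun f x => p x * Z f x / G (Z f)
    let Zc : X → ℝ := fun x => ∑ f, ω f * Z f x
    let uc : X → ℝ := fun x => p x * Zc x / G Zc
    let W : Fin F → ℝ := fun f => ω f * G (Z f) / ∑ e, ω e * G (Z e)
    (∀ x, uc x = ∑ f, W f * u f x) ∧ (∀ f, 0 ≤ W f) ∧ ∑ f, W f = 1 := by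
  intro G u Zc uc W
  have hG : ∀ f, 0 < G (Z f) := fun f =>
    Finset.sum_pos (fun x _ => mul_pos (hp x) (hZ f x)) Finset.univ_nonempty
  have hS : 0 < ∑ e, ω e * G (Z e) := by
    obtain ⟨f, hf⟩ := hωne
    exact Finset.sum_pos' (fun e _ => mul_nonneg (hω e) (hG e).le)
      ⟨f, Finset.mem_univ f, mul_pos ((hω f).lt_of_ne (Ne.symm hf)) (hG f)⟩
  have hGZc : G Zc = ∑ e, ω e * G (Z e) := by
    simp only [G, Zc, Finset.mul_sum, Finset.sum_mul]
    rw [Finset.sum_comm]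
    congr 1; ext f; congr 1; ext x; ring
  refine ⟨fun x => ?_, fun f => div_nonneg (mul_nonneg (hω f) (hG f).le) hS.le, ?_⟩
  · simp only [uc, Zc, W, u, hGZc, Finset.mul_sum, Finset.sum_div]
    refine Finset.sum_congr rfl fun f _ => ?_
    rw [div_mul_div_comm, div_eq_div_iff hS.ne' (mul_ne_zero hS.ne' (hG f).ne')]
    ring
  · simp only [W]
    rw [← Finset.sum_div, div_self hS.ne']
end
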